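/- Let a > 0 and θ ∈ (0, π/2). Then there exists a constant C > 0, depending only on a and θ, such that for every s ∈ ℝ and every w ∈ ℂ with w ≠ 0 and 0 ≤ Arg(w) ≤ θ, one has Im(R(w, τ_θ(s) − a)) ≥ (cos(θ − Arg(w)))^{1/2} · Im(w) − C, where R(ŵ,ζ) := (ŵ² + ζ²)^{1/2}. -/

import Mathlib

open Complex Real

/-- The complex path `τ_θ` associated with the square `(-a,a)²`. -/
noncomputable def tauPath (a θ s : ℝ) : ℂ :=
  if s < -a then -(a : ℂ) + ((s + a : ℝ) : ℂ) * Complex.exp (θ * Complex.I)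
  else if s ≤ a then (s : ℂ)
  else (a : ℂ) + ((s - a : ℝ) : ℂ) * Complex.exp (θ * Complex.I)

/-- The principal square root `R(ŵ,ζ) := (ŵ² + ζ²)^{1/2}`. -/
noncomputable def Rc (w ζ : ℂ) : ℂ := (w ^ 2 + ζ ^ 2) ^ ((1 : ℂ) / 2)

/-!
On the closed upper half-plane the principal square root lands in the closed first quadrant and
`(Im z^{1/2})² = (‖z‖ - Re z) / 2`, so `|Im w| ≤ Im (w² + ζ²)^{1/2}` as soon as
`Im (w² + ζ²) ≥ 0` and `‖w‖² + Re ζ² ≤ ‖w² + ζ²‖`. For `ζ = t e^{iθ}` this follows by rotating `w² + ζ²` by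
`e^{-2i arg w}` and comparing the norm with the real part: `arg w ≤ θ ≤ π/2` makes the rotation
increase the real part of `ζ²`. This settles the part `s > a` of the path, even without the factor
`√cos (θ - arg w) ≤ 1`.

The other two parts are bounded perturbations of this. For square roots `p, q` of `u, v` in the
first quadrant, `(p - q)(p + q) = u - v` and `‖p - q‖, ‖q‖ ≤ ‖p + q‖`, so `‖p - q‖` is at most
both `√‖u - v‖` and `‖u - v‖ / √‖v‖`. On `[-a, a]` compare `ζ = s - a` with `ζ = 0`; for `s < -a`,
`ζ = -(2a + t e^{iθ})` with `t = -(s + a)`, compare with `ζ = t e^{iθ}`: then `‖u - v‖` grows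
linearly in `t` while `√‖v‖ ≥ √(sin 2θ) t`.
-/

lemma le_sqrt_add_add_div_of_sq_le_of_mul_le {D A B c t : ℝ} (hA : 0 ≤ A) (hB : 0 ≤ B)
    (hc : 0 < c) (hsq : D ^ 2 ≤ A + B * t) (hmul : D * (c * t) ≤ A + B * t) :
    D ≤ √(A + B) + (A + B) / c := by
  rcases le_or_gt t 1 with ht | ht
  · have : D ≤ √(A + B) := Real.le_sqrt_of_sq_le (by nlinarith)
    have : 0 ≤ (A + B) / c := by positivity
    linarith
  · have : D ≤ (A + B) / c := by
      rw [le_div_iff₀ hc]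
      nlinarith [mul_le_mul_of_nonneg_left ht.le hA]
    linarith [Real.sqrt_nonneg (A + B)]

namespace Complex

lemma cpow_one_half_sq (z : ℂ) : (z ^ ((1 : ℂ) / 2)) ^ 2 = z := by
  simp [one_div]

lemma im_log_mul_one_half (z : ℂ) : (log z * (1 / 2)).im = z.arg / 2 := by
  simp only [mul_im, log_re, log_im]
  norm_num
  ring

lemma cpow_one_half_re_nonneg (z : ℂ) : 0 ≤ (z ^ ((1 : ℂ) / 2)).re := by
  rcases eq_or_ne z 0 with rfl | hz
  · simp
  rw [cpow_def_of_ne_zero hz, exp_re, im_log_mul_one_half]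
  exact mul_nonneg (Real.exp_pos _).le <| Real.cos_nonneg_of_mem_Icc
    ⟨by linarith [neg_pi_lt_arg z], by linarith [arg_le_pi z]⟩

lemma cpow_one_half_im_nonneg {z : ℂ} (hz : 0 ≤ z.im) : 0 ≤ (z ^ ((1 : ℂ) / 2)).im := by
  rcases eq_or_ne z 0 with rfl | hz₀
  · simp
  rw [cpow_def_of_ne_zero hz₀, exp_im, im_log_mul_one_half]
  exact mul_nonneg (Real.exp_pos _).le <| Real.sin_nonneg_of_nonneg_of_le_pi
    (by linarith [arg_nonneg_iff.mpr hz]) (by linarith [arg_le_pi z, Real.pi_pos])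

lemma im_sq_eq_norm_sq_sub_sq_re (w : ℂ) : w.im ^ 2 = (‖w‖ ^ 2 - (w ^ 2).re) / 2 := by
  rw [Complex.sq_norm, normSq_apply]
  simp only [sq, mul_re]
  ring

lemma cpow_one_half_im_sq (z : ℂ) : (z ^ ((1 : ℂ) / 2)).im ^ 2 = (‖z‖ - z.re) / 2 := by
  rw [im_sq_eq_norm_sq_sub_sq_re, ← norm_pow, cpow_one_half_sq]

lemma abs_im_le_cpow_one_half_im {w z : ℂ} (hz : 0 ≤ z.im)
    (h : ‖w‖ ^ 2 - (w ^ 2).re ≤ ‖z‖ - z.re) : |w.im| ≤ (z ^ ((1 : ℂ) / 2)).im := by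
  refine abs_le_of_sq_le_sq ?_ (cpow_one_half_im_nonneg hz)
  rw [im_sq_eq_norm_sq_sub_sq_re, cpow_one_half_im_sq]
  linarith

lemma norm_sub_le_norm_add_of_nonneg {p q : ℂ} (hpr : 0 ≤ p.re) (hpi : 0 ≤ p.im)
    (hqr : 0 ≤ q.re) (hqi : 0 ≤ q.im) : ‖p - q‖ ≤ ‖p + q‖ ∧ ‖q‖ ≤ ‖p + q‖ := by
  simp only [norm_def]
  constructor <;> apply Real.sqrt_le_sqrt <;>
    simp only [normSq_apply, add_re, add_im, sub_re, sub_im] <;>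
    nlinarith [mul_nonneg hpr hqr, mul_nonneg hpi hqi]

lemma im_sq_nonneg_of_arg {w : ℂ} (h0 : 0 ≤ w.arg) (h : w.arg ≤ π / 2) :
    0 ≤ (w ^ 2).im := by
  have hre : 0 ≤ w.re := abs_arg_le_pi_div_two_iff.mp (by rwa [abs_of_nonneg h0])
  rw [sq, mul_im]
  nlinarith [mul_nonneg hre (arg_nonneg_iff.mp h0)]

lemma ofReal_mul_exp_sq (t θ : ℝ) :
    ((t : ℂ) * exp (θ * I)) ^ 2 = ((t ^ 2 : ℝ) : ℂ) * exp ((2 * θ : ℝ) * I) := by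
  rw [mul_pow, ← Complex.exp_nat_mul]
  push_cast
  ring_nf

section SqrtDifference

variable {u v : ℂ}

lemma norm_cpow_one_half_sub_mul_norm_add (u v : ℂ) :
    ‖u ^ ((1 : ℂ) / 2) - v ^ ((1 : ℂ) / 2)‖ * ‖u ^ ((1 : ℂ) / 2) + v ^ ((1 : ℂ) / 2)‖
      = ‖u - v‖ := by
  rw [← norm_mul, mul_comm, ← sq_sub_sq, cpow_one_half_sq, cpow_one_half_sq]

lemma norm_cpow_one_half_sub_le_norm_add (hu : 0 ≤ u.im) (hv : 0 ≤ v.im) :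
    ‖u ^ ((1 : ℂ) / 2) - v ^ ((1 : ℂ) / 2)‖ ≤ ‖u ^ ((1 : ℂ) / 2) + v ^ ((1 : ℂ) / 2)‖ ∧
      ‖v ^ ((1 : ℂ) / 2)‖ ≤ ‖u ^ ((1 : ℂ) / 2) + v ^ ((1 : ℂ) / 2)‖ :=
  norm_sub_le_norm_add_of_nonneg (cpow_one_half_re_nonneg u) (cpow_one_half_im_nonneg hu)
    (cpow_one_half_re_nonneg v) (cpow_one_half_im_nonneg hv)

lemma norm_cpow_one_half_sub_sq_le (hu : 0 ≤ u.im) (hv : 0 ≤ v.im) :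
    ‖u ^ ((1 : ℂ) / 2) - v ^ ((1 : ℂ) / 2)‖ ^ 2 ≤ ‖u - v‖ := by
  rw [sq, ← norm_cpow_one_half_sub_mul_norm_add u v]
  exact mul_le_mul_of_nonneg_left (norm_cpow_one_half_sub_le_norm_add hu hv).1 (norm_nonneg _)

lemma norm_cpow_one_half_sub_mul_sqrt_le (hu : 0 ≤ u.im) (hv : 0 ≤ v.im) :
    ‖u ^ ((1 : ℂ) / 2) - v ^ ((1 : ℂ) / 2)‖ * √‖v‖ ≤ ‖u - v‖ := by
  have hnorm : √‖v‖ = ‖v ^ ((1 : ℂ) / 2)‖ := by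
    conv_lhs => rw [← cpow_one_half_sq v, norm_pow, Real.sqrt_sq (norm_nonneg _)]
  rw [hnorm, ← norm_cpow_one_half_sub_mul_norm_add u v]
  exact mul_le_mul_of_nonneg_left (norm_cpow_one_half_sub_le_norm_add hu hv).2 (norm_nonneg _)

lemma cpow_one_half_im_sub_norm_le (u v : ℂ) :
    (v ^ ((1 : ℂ) / 2)).im - ‖u ^ ((1 : ℂ) / 2) - v ^ ((1 : ℂ) / 2)‖ ≤ (u ^ ((1 : ℂ) / 2)).im := by
  have := neg_le_of_abs_le (abs_im_le_norm (u ^ ((1 : ℂ) / 2) - v ^ ((1 : ℂ) / 2)))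
  rw [sub_im] at this
  linarith

end SqrtDifference

end Complex

section Rc

variable {w : ℂ} {θ : ℝ}

lemma Rc_neg (w ζ : ℂ) : Rc w (-ζ) = Rc w ζ := by
  rw [Rc, Rc, neg_sq]

lemma norm_sq_add_re_sq_le_norm (t : ℝ) (h0 : 0 ≤ w.arg) (hθ : w.arg ≤ θ) (hθπ : θ ≤ π / 2) :
    ‖w‖ ^ 2 + ((t * exp (θ * I)) ^ 2).re ≤ ‖w ^ 2 + (t * exp (θ * I)) ^ 2‖ := by
  have hrot : (w ^ 2 + (t * exp (θ * I)) ^ 2) * exp ((-(2 * w.arg) : ℝ) * I)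
      = ((‖w‖ ^ 2 : ℝ) : ℂ) + ((t ^ 2 : ℝ) : ℂ) * exp ((2 * (θ - w.arg) : ℝ) * I) := by
    have hw := (norm_mul_exp_arg_mul_I w).symm
    set φ := w.arg
    set r := ‖w‖
    rw [hw, add_mul, mul_pow, mul_pow, ← Complex.exp_nat_mul, ← Complex.exp_nat_mul, mul_assoc,
      mul_assoc, ← Complex.exp_add, ← Complex.exp_add]
    push_cast
    ring_nf
    simp
  have hcos : Real.cos (2 * θ) ≤ Real.cos (2 * (θ - w.arg)) :=
    Real.cos_le_cos_of_nonneg_of_le_pi (by linarith) (by linarith) (by linarith)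
  calc ‖w‖ ^ 2 + ((t * exp (θ * I)) ^ 2).re = ‖w‖ ^ 2 + t ^ 2 * Real.cos (2 * θ) := by
        rw [ofReal_mul_exp_sq, re_ofReal_mul, exp_ofReal_mul_I_re]
    _ ≤ ‖w‖ ^ 2 + t ^ 2 * Real.cos (2 * (θ - w.arg)) := by gcongr
    _ = ((w ^ 2 + (t * exp (θ * I)) ^ 2) * exp ((-(2 * w.arg) : ℝ) * I)).re := by
        rw [hrot, add_re, ofReal_re, re_ofReal_mul, exp_ofReal_mul_I_re]
    _ ≤ ‖(w ^ 2 + (t * exp (θ * I)) ^ 2) * exp ((-(2 * w.arg) : ℝ) * I)‖ := re_le_norm _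
    _ = ‖w ^ 2 + (t * exp (θ * I)) ^ 2‖ := by rw [norm_mul, norm_exp_ofReal_mul_I, mul_one]

lemma sq_mul_sin_le_im_sq_add (t : ℝ) (hw : 0 ≤ (w ^ 2).im) :
    t ^ 2 * Real.sin (2 * θ) ≤ (w ^ 2 + (t * exp (θ * I)) ^ 2).im := by
  rw [add_im, ofReal_mul_exp_sq, im_ofReal_mul, exp_ofReal_mul_I_im]
  linarith

lemma im_le_im_Rc_ofReal_mul_exp (t : ℝ) (h0 : 0 ≤ w.arg) (hθ : w.arg ≤ θ) (hθπ : θ ≤ π / 2) :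
    w.im ≤ (Rc w (t * exp (θ * I))).im := by
  have hsin : 0 ≤ Real.sin (2 * θ) :=
    Real.sin_nonneg_of_nonneg_of_le_pi (by linarith) (by linarith)
  have him : 0 ≤ (w ^ 2 + (t * exp (θ * I)) ^ 2).im :=
    (by positivity : 0 ≤ t ^ 2 * Real.sin (2 * θ)).trans
      (sq_mul_sin_le_im_sq_add t (im_sq_nonneg_of_arg h0 (hθ.trans hθπ)))
  refine (le_abs_self _).trans (abs_im_le_cpow_one_half_im him ?_)
  have := norm_sq_add_re_sq_le_norm t h0 hθ hθπ
  rw [add_re]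
  linarith

lemma im_sub_abs_le_im_Rc_ofReal (hw : 0 ≤ (w ^ 2).im) (x : ℝ) : w.im - |x| ≤ (Rc w x).im := by
  have hu : 0 ≤ (w ^ 2 + (x : ℂ) ^ 2).im := by rwa [add_im, ← ofReal_pow, ofReal_im, add_zero]
  have hD : ‖(w ^ 2 + (x : ℂ) ^ 2) ^ ((1 : ℂ) / 2) - (w ^ 2) ^ ((1 : ℂ) / 2)‖ ≤ |x| := by
    have := norm_cpow_one_half_sub_sq_le hu hw
    rwa [add_sub_cancel_left, norm_pow, norm_real, Real.norm_eq_abs,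
      sq_le_sq₀ (norm_nonneg _) (abs_nonneg _)] at this
  have hw' : w.im ≤ ((w ^ 2) ^ ((1 : ℂ) / 2)).im :=
    (le_abs_self _).trans (abs_im_le_cpow_one_half_im hw (by rw [norm_pow]))
  have := cpow_one_half_im_sub_norm_le (w ^ 2 + (x : ℂ) ^ 2) (w ^ 2)
  rw [Rc]
  linarith

lemma im_sub_le_im_Rc_two_mul_add {a t : ℝ} (ha : 0 ≤ a) (ht : 0 ≤ t) (h0 : 0 ≤ w.arg)
    (hθw : w.arg ≤ θ) (hθ₀ : 0 < θ) (hθ₁ : θ < π / 2) :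
    w.im - (√(4 * a ^ 2 + 4 * a) + (4 * a ^ 2 + 4 * a) / √(Real.sin (2 * θ))) ≤
      (Rc w (2 * a + t * exp (θ * I))).im := by
  set ζ : ℂ := t * exp (θ * I) with hζ
  set u := w ^ 2 + (2 * a + ζ) ^ 2
  set v := w ^ 2 + ζ ^ 2
  have hw := im_sq_nonneg_of_arg h0 (by linarith)
  have hsin : 0 < Real.sin (2 * θ) := Real.sin_pos_of_pos_of_lt_pi (by positivity) (by linarith)
  have hv : t ^ 2 * Real.sin (2 * θ) ≤ v.im := sq_mul_sin_le_im_sq_add t hw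
  have hv₀ : 0 ≤ v.im := hv.trans' (by positivity)
  have hu : 0 ≤ u.im := by
    have hζim : 0 ≤ ζ.im := by
      rw [hζ, im_ofReal_mul, exp_ofReal_mul_I_im]
      exact mul_nonneg ht (Real.sin_nonneg_of_nonneg_of_le_pi hθ₀.le (by linarith))
    have : u.im = v.im + 4 * a * ζ.im := by
      simp only [u, v, add_im, mul_im, ofReal_re, ofReal_im, sq]
      norm_num
      ring
    nlinarith
  have huv : ‖u - v‖ ≤ 4 * a ^ 2 + 4 * a * t := by
    have : u - v = ((4 * a ^ 2 : ℝ) : ℂ) + ((4 * a : ℝ) : ℂ) * ζ := by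
      simp only [u, v]
      push_cast
      ring
    rw [this]
    refine (norm_add_le _ _).trans (le_of_eq ?_)
    rw [norm_mul, hζ, norm_mul, norm_exp_ofReal_mul_I, mul_one]
    simp only [norm_real, Real.norm_of_nonneg ht, Real.norm_of_nonneg (by positivity : 0 ≤ 4 * a),
      Real.norm_of_nonneg (by positivity : 0 ≤ 4 * a ^ 2)]
  have hnv : √(Real.sin (2 * θ)) * t ≤ √‖v‖ := by
    rw [← Real.sqrt_sq ht, ← Real.sqrt_mul hsin.le]
    exact Real.sqrt_le_sqrt (by linarith [im_le_norm v])
  have hD := le_sqrt_add_add_div_of_sq_le_of_mul_le (by positivity) (by positivity)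
    (Real.sqrt_pos.mpr hsin) ((norm_cpow_one_half_sub_sq_le hu hv₀).trans huv)
    (((mul_le_mul_of_nonneg_left hnv (norm_nonneg _)).trans
      (norm_cpow_one_half_sub_mul_sqrt_le hu hv₀)).trans huv)
  have := im_le_im_Rc_ofReal_mul_exp t h0 hθw hθ₁.le
  have := cpow_one_half_im_sub_norm_le u v
  rw [Rc] at *
  linarith

end Rc

/-- Let `a > 0` and `θ ∈ (0, π/2)`. Then there exists a constant `C > 0`, depending only
on `a` and `θ`, such that for every `s ∈ ℝ` and every `w ≠ 0` with `0 ≤ Arg w ≤ θ`,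
`Im(R(w, τ_θ(s) − a)) ≥ (cos(θ − Arg w))^{1/2} · Im w − C`. -/
theorem stmt_7 (a θ : ℝ) (ha : 0 < a) (hθ₀ : 0 < θ) (hθ₁ : θ < π / 2) :
    ∃ C > (0 : ℝ), ∀ (s : ℝ) (w : ℂ), w ≠ 0 → 0 ≤ w.arg → w.arg ≤ θ →
      Real.sqrt (Real.cos (θ - w.arg)) * w.im - C ≤
        (Rc w (tauPath a θ s - (a : ℂ))).im := by
  set K := √(4 * a ^ 2 + 4 * a) + (4 * a ^ 2 + 4 * a) / √(Real.sin (2 * θ))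
  have hK : 0 ≤ K := by positivity
  refine ⟨2 * a + K, by positivity, fun s w _ h0 hθw => ?_⟩
  have hcos : √(Real.cos (θ - w.arg)) * w.im ≤ w.im :=
    mul_le_of_le_one_left (arg_nonneg_iff.mp h0) (Real.sqrt_le_one.mpr (Real.cos_le_one _))
  suffices w.im - (2 * a + K) ≤ (Rc w (tauPath a θ s - a)).im by linarith
  unfold tauPath
  split_ifs with hs₁ hs₂
  · have := im_sub_le_im_Rc_two_mul_add (t := -(s + a)) ha.le (by linarith) h0 hθw hθ₀ hθ₁
    rw [show -(a : ℂ) + ((s + a : ℝ) : ℂ) * exp (θ * I) - a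
      = -(2 * a + ((-(s + a) : ℝ) : ℂ) * exp (θ * I)) by push_cast; ring, Rc_neg]
    linarith
  · have := im_sub_abs_le_im_Rc_ofReal (im_sq_nonneg_of_arg h0 (by linarith)) (s - a)
    rw [abs_of_nonpos (by linarith)] at this
    push_cast at this
    linarith
  · rw [add_sub_cancel_left]
    have := im_le_im_Rc_ofReal_mul_exp (s - a) h0 hθw hθ₁.le
    linarith
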